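/- Under hypotheses (Hγ), (Hη), (Hη0) and the stated choice of L, the second Craig condition holds: sup_{m ∈ ℤ^ν ∖ {0}} γ_m^{1/2} · (1 + η_{m,0})/η_{m,0} · C_m < ∞. -/
import Mathlib


open scoped Real BigOperators
open Real

noncomputable section

/-- `|m| = ∑_i |m_i|` (ℓ¹ norm on `ℤ^ν`, as a real number). -/
def znorm {ν : ℕ} (m : Fin ν → ℤ) : ℝ := ∑ i, |(m i : ℝ)|

lemma znorm_nonneg {ν : ℕ} (m : Fin ν → ℤ) : 0 ≤ znorm m :=
  Finset.sum_nonneg fun i _ => abs_nonneg _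

lemma one_le_znorm {ν : ℕ} {m : Fin ν → ℤ} (hm : m ≠ 0) : 1 ≤ znorm m := by
  obtain ⟨i, hi⟩ := Function.ne_iff.mp hm
  have h1 : (1 : ℝ) ≤ |(m i : ℝ)| := by
    have : (1 : ℤ) ≤ |m i| := Int.one_le_abs (by simpa using hi)
    calc (1:ℝ) = ((1:ℤ):ℝ) := by norm_num
    _ ≤ ((|m i| : ℤ) : ℝ) := by exact_mod_cast this
    _ = |(m i : ℝ)| := by push_cast; ring
  unfold znorm
  calc (1:ℝ) ≤ |(m i : ℝ)| := h1
  _ ≤ ∑ j, |(m j : ℝ)| :=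
    Finset.single_le_sum (f := fun j => |(m j : ℝ)|) (fun j _ => abs_nonneg _) (Finset.mem_univ i)

lemma summable_exp_neg_abs_int {c : ℝ} (hc : 0 < c) :
    Summable fun k : ℤ => Real.exp (-(c * |(k : ℝ)|)) := by
  have hgeom : Summable fun n : ℕ => Real.exp (-c) ^ n :=
    summable_geometric_of_lt_one (Real.exp_nonneg _) (Real.exp_lt_one_iff.mpr (by linarith))
  apply Summable.of_nat_of_neg
  · refine hgeom.congr fun n => ?_
    rw [← Real.exp_nat_mul]
    congr 1
    rw [abs_of_nonneg (by positivity : (0:ℝ) ≤ ((n:ℤ):ℝ))]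
    push_cast; ring
  · refine hgeom.congr fun n => ?_
    rw [← Real.exp_nat_mul]
    congr 1
    rw [show ((-(n:ℤ) : ℤ) : ℝ) = -(n : ℝ) by push_cast; ring, abs_neg,
      abs_of_nonneg (by positivity : (0:ℝ) ≤ (n:ℝ))]
    ring

lemma summable_exp_neg_znorm : ∀ {ν : ℕ} {c : ℝ}, 0 < c →
    Summable fun n : Fin ν → ℤ => Real.exp (-(c * znorm n)) := by
  intro ν
  induction ν with
  | zero =>
    intro c hc
    exact Summable.of_finite
  | succ k ih =>
    intro c hc
    rw [← Equiv.summable_iff (Fin.consEquiv (fun _ : Fin (k+1) => ℤ))]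
    have key : Summable (fun p : ℤ × (Fin k → ℤ) =>
        Real.exp (-(c * |(p.1 : ℝ)|)) * Real.exp (-(c * znorm p.2))) :=
      (summable_exp_neg_abs_int hc).mul_of_nonneg (ih hc)
        (fun _ => (Real.exp_pos _).le) (fun _ => (Real.exp_pos _).le)
    refine key.congr fun p => ?_
    rw [← Real.exp_add]
    congr 1
    have : znorm (Fin.consEquiv (fun _ : Fin (k+1) => ℤ) p) = |(p.1 : ℝ)| + znorm p.2 := by
      show znorm (Fin.cons p.1 p.2) = _
      unfold znorm
      rw [Fin.sum_univ_succ]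
      simp
    rw [this]; ring

lemma tprod_le_exp_tsum {ι : Type*} (f u : ι → ℝ)
    (h1 : ∀ i, 1 ≤ f i) (hle : ∀ i, Real.log (f i) ≤ u i) (hu : Summable u) :
    (∏' i, f i) ≤ Real.exp (∑' i, u i) := by
  have hpos : ∀ i, 0 < f i := fun i => lt_of_lt_of_le one_pos (h1 i)
  have hlogn : ∀ i, 0 ≤ Real.log (f i) := fun i => Real.log_nonneg (h1 i)
  have hsl : Summable fun i => Real.log (f i) := Summable.of_nonneg_of_le hlogn hle hu
  have hp : HasProd f (Real.exp (∑' i, Real.log (f i))) := by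
    have h := hsl.hasSum.rexp
    have hfun : (rexp ∘ fun i => Real.log (f i)) = f :=
      funext fun i => Real.exp_log (hpos i)
    rwa [hfun] at h
  rw [hp.tprod_eq]
  exact Real.exp_le_exp.mpr (Summable.tsum_le_tsum hle hsl hu)

lemma exp34_le {σ X : ℝ} (hσ : 0 < σ) (hX : 0 ≤ X) :
    Real.exp (3 / 4 * X) ≤ σ * Real.exp X + (1 / σ) ^ 3 := by
  set Y := Real.exp (X / 4) with hY
  have hY1 : 1 ≤ Y := Real.one_le_exp (by linarith)
  have h3 : Real.exp (3 / 4 * X) = Y ^ 3 := by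
    rw [hY, ← Real.exp_nat_mul]; congr 1; push_cast; ring
  have h4 : Real.exp X = Y ^ 4 := by
    rw [hY, ← Real.exp_nat_mul]; congr 1; push_cast; ring
  rw [h3, h4]
  have hY3 : (0:ℝ) ≤ Y ^ 3 := by positivity
  have hσ3 : (0:ℝ) ≤ (1/σ) ^ 3 := by positivity
  rcases le_or_gt 1 (σ * Y) with h | h
  · have h2 : Y ^ 3 * 1 ≤ Y ^ 3 * (σ * Y) := mul_le_mul_of_nonneg_left h hY3
    have h3' : Y ^ 3 ≤ σ * Y ^ 4 := by nlinarith
    linarith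
  · have hYσ : Y < 1 / σ := by
      rw [lt_div_iff₀ hσ]; nlinarith
    have h2 : Y ^ 3 ≤ (1/σ) ^ 3 := pow_le_pow_left₀ (by linarith) hYσ.le 3
    have h4' : (0:ℝ) ≤ σ * Y ^ 4 := by positivity
    linarith


/-- Distance between the gaps labelled `m` and `n`
(equals `dist ([Em m, Ep m], [Em n, Ep n])` when these closed intervals are disjoint). -/
def gapDist {ν : ℕ} (Em Ep : (Fin ν → ℤ) → ℝ) (m n : Fin ν → ℤ) : ℝ :=
  max (Em n - Ep m) (Em m - Ep n)

/-- Gap length `γ_m = E_m^+ - E_m^-`. -/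
def gapLen {ν : ℕ} (Em Ep : (Fin ν → ℤ) → ℝ) (m : Fin ν → ℤ) : ℝ := Ep m - Em m

/-- The exceptional set `R_m = { n ∈ ℤ^ν ∖ {0} : n ≠ m, γ_n > L η_{n,m}⁴ }`. -/
def Rset {ν : ℕ} (Em Ep : (Fin ν → ℤ) → ℝ) (L : ℝ) (m : Fin ν → ℤ) : Set (Fin ν → ℤ) :=
  {n | n ≠ 0 ∧ n ≠ m ∧ L * gapDist Em Ep n m ^ 4 < gapLen Em Ep n}

/-- `C_m = (η_{m,0} + γ_m)^{1/2} ∏_{n ≠ m} (1 + γ_n/η_{m,n})^{1/2}`, the product running over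
all nonzero labels `n ≠ m`. -/
def Cm {ν : ℕ} (Em Ep : (Fin ν → ℤ) → ℝ) (E0 : ℝ) (m : Fin ν → ℤ) : ℝ :=
  Real.sqrt ((Em m - E0) + gapLen Em Ep m) *
    ∏' n : {n : Fin ν → ℤ // n ≠ 0 ∧ n ≠ m},
      Real.sqrt (1 + gapLen Em Ep n / gapDist Em Ep m n)

set_option maxHeartbeats 1000000 in
/-- The second Craig condition: `sup_{m≠0} γ_m^{1/2} (1 + η_{m,0})/η_{m,0} · C_m < ∞`. -/
theorem second_craig_condition
    {ν : ℕ} (hν : 0 < ν) (ε κ₀ a b c E0 L : ℝ)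
    (hε : 0 < ε) (hκ₀ : 0 < κ₀) (hκ₁ : κ₀ ≤ 1) (ha : 0 < a) (hb : 0 < b) (hc : 0 < c)
    (Em Ep : (Fin ν → ℤ) → ℝ)
    (hlt : ∀ m : Fin ν → ℤ, m ≠ 0 → Em m < Ep m)
    (hE0 : ∀ m : Fin ν → ℤ, m ≠ 0 → E0 < Em m)
    (hdisj : ∀ m n : Fin ν → ℤ, m ≠ 0 → n ≠ 0 → m ≠ n → Ep m < Em n ∨ Ep n < Em m)
    (Hγ : ∀ m : Fin ν → ℤ, m ≠ 0 →
      gapLen Em Ep m < 2 * ε * Real.exp (-(κ₀ * znorm m) / 2))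
    (Hη : ∀ m n : Fin ν → ℤ, m ≠ 0 → n ≠ 0 → m ≠ n → znorm n ≤ znorm m →
      a * znorm m ^ (-b) ≤ gapDist Em Ep m n)
    (Hη0low : ∀ m : Fin ν → ℤ, m ≠ 0 → a * znorm m ^ (-b) ≤ Em m - E0)
    (Hη0 : ∀ m : Fin ν → ℤ, m ≠ 0 → Em m - E0 ≤ c * znorm m ^ (2 : ℕ))
    (hL : 0 < L)
    (hLbig : ∀ m : Fin ν → ℤ, m ≠ 0 →
      2 * ε * Real.exp (-(κ₀ * znorm m) / 2) < L * a ^ 4 * znorm m ^ (-(4 * b)))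
    :
    ∃ M : ℝ, ∀ m : Fin ν → ℤ, m ≠ 0 →
      Real.sqrt (gapLen Em Ep m) * ((1 + (Em m - E0)) / (Em m - E0)) * Cm Em Ep E0 m ≤ M := by
  classical
  have h38 : 0 < 3 * κ₀ / 8 := by positivity
  set t : ℝ := κ₀ / (16 * b) with ht_def
  have ht : 0 < t := by rw [ht_def]; positivity
  set K : ℝ := L ^ ((1:ℝ)/4) * (2*ε) ^ ((3:ℝ)/4) with hK_def
  have hK0 : 0 ≤ K := by rw [hK_def]; positivity
  set C₂ : ℝ := Real.log (1 + 2*ε/a) with hC2_def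
  have hC20 : 0 ≤ C₂ := Real.log_nonneg (by
    have h : (0:ℝ) ≤ 2*ε/a := div_nonneg (by linarith only [hε]) ha.le
    linarith only [h])
  set A : ℝ := -((2/κ₀) * Real.log (L * a^4 / (2*ε))) with hA_def
  have hsum1 : Summable (fun n : Fin ν → ℤ => Real.exp (-(3*κ₀/8 * znorm n))) :=
    summable_exp_neg_znorm h38
  have hsum2 : Summable (fun n : Fin ν → ℤ => Real.exp (-(t * znorm n))) :=
    summable_exp_neg_znorm ht
  set S₁ : ℝ := ∑' n : Fin ν → ℤ, Real.exp (-(3*κ₀/8 * znorm n)) with hS1_def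
  set S₂ : ℝ := ∑' n : Fin ν → ℤ, Real.exp (-(t * znorm n)) with hS2_def
  have hS1 : 0 ≤ S₁ := tsum_nonneg fun n => (Real.exp_pos _).le
  have hS2 : 0 ≤ S₂ := tsum_nonneg fun n => (Real.exp_pos _).le
  set G : ℝ := Real.exp (t*A) * S₂ with hG_def
  have hG : 0 ≤ G := mul_nonneg (Real.exp_nonneg _) hS2
  set D : ℝ := 4*(b+1) + C₂*G/2 + 2*b*G with hD_def
  have hD : 0 ≤ D := by
    have h1 : 0 ≤ C₂*G := mul_nonneg hC20 hG
    have h2 : 0 ≤ b*G := mul_nonneg hb.le hG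
    rw [hD_def]; linarith
  have hD1 : (0:ℝ) < D + 1 := by linarith
  set σ : ℝ := κ₀ / (4*(D+1)) with hσ_def
  have hσ : 0 < σ := by rw [hσ_def]; positivity
  have hDσ : D * σ ≤ κ₀ / 4 := by
    have h2 : D/(D+1) ≤ 1 := (div_le_one hD1).mpr (by linarith only [])
    have h1 : D * σ = κ₀/4 * (D/(D+1)) := by
      rw [hσ_def]; field_simp
    calc D * σ = κ₀/4 * (D/(D+1)) := h1
    _ ≤ κ₀/4 * 1 := mul_le_mul_of_nonneg_left h2 (by positivity)
    _ = κ₀/4 := mul_one _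
  refine ⟨(Real.sqrt (2*ε) * (1/a+1) * Real.sqrt (c+2*ε)) *
    Real.exp (K/2*S₁ + D*(1/σ)^3), ?_⟩
  intro m hm0
  set r := znorm m with hr_def
  have hr1 : 1 ≤ r := one_le_znorm hm0
  have hr0 : 0 < r := lt_of_lt_of_le one_pos hr1
  set X := Real.log r with hX_def
  have hX0 : 0 ≤ X := Real.log_nonneg hr1
  have hrX : Real.exp X = r := Real.exp_log hr0
  have hrbpos : 0 < r ^ (-b) := Real.rpow_pos_of_pos hr0 _
  have harb0 : 0 < a * r ^ (-b) := by positivity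
  have hη0low : a * r ^ (-b) ≤ Em m - E0 := Hη0low m hm0
  have hη0pos : 0 < Em m - E0 := lt_of_lt_of_le harb0 hη0low
  set Wr : ℝ := (C₂ + b * X) * Real.exp (t*A + X/2) with hWr_def
  have hCbX : 0 ≤ C₂ + b * X := add_nonneg hC20 (mul_nonneg hb.le hX0)
  have hWr0 : 0 ≤ Wr := by rw [hWr_def]; exact mul_nonneg hCbX (Real.exp_nonneg _)
  -- the per-term bound
  have keyterm : ∀ n : Fin ν → ℤ, n ≠ 0 → n ≠ m →
      (0 ≤ gapLen Em Ep n / gapDist Em Ep m n) ∧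
      Real.log (1 + gapLen Em Ep n / gapDist Em Ep m n) / 2
        ≤ K/2 * Real.exp (-(3*κ₀/8 * znorm n)) + Wr/2 * Real.exp (-(t * znorm n)) := by
    intro n hn0 hnm
    set g := gapLen Em Ep n with hg_def
    set d := gapDist Em Ep m n with hd_def
    set rn := znorm n with hrn_def
    have hrn1 : 1 ≤ rn := one_le_znorm hn0
    have hrn0 : 0 < rn := lt_of_lt_of_le one_pos hrn1
    have hg0 : 0 < g := sub_pos.mpr (hlt n hn0)
    have hgup : g < 2*ε * Real.exp (-(κ₀ * rn)/2) := Hγ n hn0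
    have hmn : m ≠ n := fun h => hnm h.symm
    have hdcomm : gapDist Em Ep n m = d := by
      rw [hd_def]; unfold gapDist; rw [max_comm]
    have hd_ge : a * (max r rn) ^ (-b) ≤ d := by
      rcases le_total rn r with h | h
      · rw [max_eq_left h]; exact Hη m n hm0 hn0 hmn h
      · rw [max_eq_right h, ← hdcomm]; exact Hη n m hn0 hm0 hnm h
    have hmax0 : 0 < max r rn := lt_of_lt_of_le hr0 (le_max_left _ _)
    have hd0 : 0 < d :=
      lt_of_lt_of_le (by positivity : (0:ℝ) < a * (max r rn) ^ (-b)) hd_ge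
    have hgd0 : 0 ≤ g / d := le_of_lt (div_pos hg0 hd0)
    refine ⟨hgd0, ?_⟩
    have hlog_pos : (0:ℝ) < 1 + g / d := by linarith
    rcases le_or_gt g (L * d ^ 4) with hcase | hcase
    · -- non-exceptional label
      have hlog : Real.log (1 + g/d) ≤ g / d := by
        have h := Real.log_le_sub_one_of_pos hlog_pos
        linarith
      have hq : g ^ ((1:ℝ)/4) ≤ L ^ ((1:ℝ)/4) * d := by
        have h1 : g ^ ((1:ℝ)/4) ≤ (L * d^4) ^ ((1:ℝ)/4) :=
          Real.rpow_le_rpow hg0.le hcase (by norm_num)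
        have h2 : (L * d^4) ^ ((1:ℝ)/4) = L ^ ((1:ℝ)/4) * d := by
          rw [Real.mul_rpow hL.le (by positivity), ← Real.rpow_natCast d 4,
            ← Real.rpow_mul hd0.le]
          norm_num
        rw [h2] at h1; exact h1
      have hgd : g / d ≤ L ^ ((1:ℝ)/4) * g ^ ((3:ℝ)/4) := by
        rw [div_le_iff₀ hd0]
        have hsplit : g = g ^ ((3:ℝ)/4) * g ^ ((1:ℝ)/4) := by
          rw [← Real.rpow_add hg0]; norm_num
        calc g = g ^ ((3:ℝ)/4) * g ^ ((1:ℝ)/4) := hsplit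
        _ ≤ g ^ ((3:ℝ)/4) * (L ^ ((1:ℝ)/4) * d) :=
          mul_le_mul_of_nonneg_left hq (Real.rpow_nonneg hg0.le _)
        _ = L ^ ((1:ℝ)/4) * g ^ ((3:ℝ)/4) * d := by ring
      have hg34 : g ^ ((3:ℝ)/4) ≤ (2*ε) ^ ((3:ℝ)/4) * Real.exp (-(3*κ₀/8 * rn)) := by
        have h1 : g ^ ((3:ℝ)/4) ≤ (2*ε * Real.exp (-(κ₀*rn)/2)) ^ ((3:ℝ)/4) :=
          Real.rpow_le_rpow hg0.le hgup.le (by norm_num)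
        have h2 : (2*ε * Real.exp (-(κ₀*rn)/2)) ^ ((3:ℝ)/4)
            = (2*ε) ^ ((3:ℝ)/4) * Real.exp (-(3*κ₀/8 * rn)) := by
          rw [Real.mul_rpow (by positivity) (Real.exp_nonneg _),
            Real.rpow_def_of_pos (Real.exp_pos _), Real.log_exp]
          congr 1
          ring
        rw [h2] at h1; exact h1
      have hmul : L ^ ((1:ℝ)/4) * g ^ ((3:ℝ)/4)
          ≤ L ^ ((1:ℝ)/4) * ((2*ε) ^ ((3:ℝ)/4) * Real.exp (-(3*κ₀/8 * rn))) :=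
        mul_le_mul_of_nonneg_left hg34 (Real.rpow_nonneg hL.le _)
      have hKe : L ^ ((1:ℝ)/4) * ((2*ε) ^ ((3:ℝ)/4) * Real.exp (-(3*κ₀/8 * rn)))
          = K * Real.exp (-(3*κ₀/8 * rn)) := by rw [hK_def]; ring
      have hW : 0 ≤ Wr/2 * Real.exp (-(t * rn)) :=
        mul_nonneg (by linarith) (Real.exp_nonneg _)
      rw [hKe] at hmul
      linarith
    · -- exceptional label
      have hrnr : rn ≤ r := by
        by_contra hcon
        push_neg at hcon
        have hdn : a * rn ^ (-b) ≤ d := by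
          have h := hd_ge; rwa [max_eq_right hcon.le] at h
        have hid : (a * rn ^ (-b))^4 = a^4 * rn ^ (-(4*b)) := by
          have he : ((-b) * ((4:ℕ):ℝ)) = -(4*b) := by push_cast; ring
          rw [mul_pow, ← Real.rpow_natCast (rn ^ (-b)) 4, ← Real.rpow_mul hrn0.le, he]
        have hp4 : L * (a^4 * rn ^ (-(4*b))) ≤ L * d^4 := by
          rw [← hid]
          exact mul_le_mul_of_nonneg_left
            (pow_le_pow_left₀ (by positivity) hdn 4) hL.le
        have hbig := hLbig n hn0
        rw [← hrn_def] at hbig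
        have hp4' : L * a^4 * rn ^ (-(4*b)) ≤ L * d^4 := by
          have he2 : L * a^4 * rn ^ (-(4*b)) = L * (a^4 * rn ^ (-(4*b))) := by ring
          rw [he2]; exact hp4
        linarith only [hp4', hcase, hgup, hbig]
      have hd_ge' : a * r ^ (-b) ≤ d := by
        have h := hd_ge; rwa [max_eq_left hrnr] at h
      have hgle : g ≤ 2*ε := by
        have h0 : 0 ≤ κ₀ * rn := mul_nonneg hκ₀.le (by linarith only [hrn1])
        have h1 : Real.exp (-(κ₀*rn)/2) ≤ 1 :=
          Real.exp_le_one_iff.mpr (by linarith only [h0])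
        have h2 : 2*ε * Real.exp (-(κ₀*rn)/2) ≤ 2*ε * 1 :=
          mul_le_mul_of_nonneg_left h1 (by linarith only [hε])
        linarith only [hgup, h2]
      have hrb1 : 1 ≤ r ^ b := Real.one_le_rpow hr1 hb.le
      have hrbp : 0 < r ^ b := Real.rpow_pos_of_pos hr0 _
      have hdiv : g / d ≤ 2*ε/a * r ^ b := by
        have h1 : g / d ≤ 2*ε / (a * r ^ (-b)) :=
          div_le_div₀ (by linarith) hgle harb0 hd_ge'
        have h2 : 2*ε / (a * r ^ (-b)) = 2*ε/a * r ^ b := by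
          rw [Real.rpow_neg hr0.le]
          field_simp
        rw [h2] at h1; exact h1
      have hlogb : Real.log (1 + g/d) ≤ C₂ + b * X := by
        have hεa : 0 ≤ 2*ε/a := by positivity
        have h1 : 1 + g/d ≤ (1 + 2*ε/a) * r ^ b := by
          have he : (1 + 2*ε/a) * r ^ b = r ^ b + 2*ε/a * r ^ b := by ring
          rw [he]
          linarith only [hdiv, hrb1]
        have h2 := Real.log_le_log hlog_pos h1
        rw [Real.log_mul (by positivity) (ne_of_gt hrbp), Real.log_rpow hr0,
          ← hC2_def, ← hX_def] at h2
        exact h2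
      -- bound on rn
      have hL4 : L * a^4 * r ^ (-(4*b)) < 2*ε * Real.exp (-(κ₀*rn)/2) := by
        have hid : (a * r ^ (-b))^4 = a^4 * r ^ (-(4*b)) := by
          have he : ((-b) * ((4:ℕ):ℝ)) = -(4*b) := by push_cast; ring
          rw [mul_pow, ← Real.rpow_natCast (r ^ (-b)) 4, ← Real.rpow_mul hr0.le, he]
        have hp4 : L * (a^4 * r ^ (-(4*b))) ≤ L * d^4 := by
          rw [← hid]
          exact mul_le_mul_of_nonneg_left
            (pow_le_pow_left₀ (by positivity) hd_ge' 4) hL.le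
        have hp4' : L * a^4 * r ^ (-(4*b)) ≤ L * d^4 := by
          have he2 : L * a^4 * r ^ (-(4*b)) = L * (a^4 * r ^ (-(4*b))) := by ring
          rw [he2]; exact hp4
        linarith only [hp4', hcase, hgup]
      have hrnA : t * rn ≤ t * A + X / 2 := by
        have hlhs0 : 0 < L * a^4 * r ^ (-(4*b)) := by positivity
        have hlog2 := Real.log_lt_log hlhs0 hL4
        rw [Real.log_mul (by positivity) (Real.exp_ne_zero _), Real.log_exp,
          Real.log_mul (by positivity) (ne_of_gt (Real.rpow_pos_of_pos hr0 _)),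
          Real.log_rpow hr0, ← hX_def] at hlog2
        -- hlog2 : log (L*a^4) + (-(4*b)) * X < log (2*ε) + (-(κ₀*rn)/2)
        have hkey : κ₀ * rn / 2 < Real.log (2*ε) - Real.log (L*a^4) + 4*b*X := by
          linarith
        have hmul := mul_lt_mul_of_pos_right hkey (show (0:ℝ) < 1/(8*b) by positivity)
        have e1 : κ₀ * rn / 2 * (1/(8*b)) = t * rn := by
          rw [ht_def]; field_simp; ring
        have e2 : (Real.log (2*ε) - Real.log (L*a^4) + 4*b*X) * (1/(8*b)) = t*A + X/2 := by
          have hlogdiv : Real.log (L*a^4/(2*ε)) = Real.log (L*a^4) - Real.log (2*ε) :=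
            Real.log_div (by positivity) (by positivity)
          rw [ht_def, hA_def, hlogdiv]; field_simp; ring
        rw [e1, e2] at hmul
        exact hmul.le
      have hexp1 : 1 ≤ Real.exp (t*A + X/2 - t*rn) := Real.one_le_exp (by linarith)
      have h5 : C₂ + b*X ≤ (C₂ + b*X) * Real.exp (t*A + X/2 - t*rn) := by
        nth_rewrite 1 [← mul_one (C₂ + b*X)]
        exact mul_le_mul_of_nonneg_left hexp1 hCbX
      have h6 : (C₂ + b*X) * Real.exp (t*A + X/2 - t*rn) = Wr * Real.exp (-(t*rn)) := by
        rw [hWr_def, mul_assoc, ← Real.exp_add]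
        congr 2 <;> ring
      rw [h6] at h5
      have h7 : 0 ≤ K/2 * Real.exp (-(3*κ₀/8 * rn)) :=
        mul_nonneg (by linarith) (Real.exp_nonneg _)
      linarith
  -- product bound
  have htpb := tprod_le_exp_tsum
    (f := fun x : {n : Fin ν → ℤ // n ≠ 0 ∧ n ≠ m} =>
      Real.sqrt (1 + gapLen Em Ep x.1 / gapDist Em Ep m x.1))
    (u := fun x : {n : Fin ν → ℤ // n ≠ 0 ∧ n ≠ m} =>
      K/2 * Real.exp (-(3*κ₀/8 * znorm x.1)) + Wr/2 * Real.exp (-(t * znorm x.1)))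
  have husum : Summable (fun n : Fin ν → ℤ =>
      K/2 * Real.exp (-(3*κ₀/8 * znorm n)) + Wr/2 * Real.exp (-(t * znorm n))) :=
    (hsum1.mul_left (K/2)).add (hsum2.mul_left (Wr/2))
  have husub : Summable (fun x : {n : Fin ν → ℤ // n ≠ 0 ∧ n ≠ m} =>
      K/2 * Real.exp (-(3*κ₀/8 * znorm x.1)) + Wr/2 * Real.exp (-(t * znorm x.1))) :=
    husum.subtype _
  have hone : ∀ x : {n : Fin ν → ℤ // n ≠ 0 ∧ n ≠ m},
      1 ≤ Real.sqrt (1 + gapLen Em Ep x.1 / gapDist Em Ep m x.1) := by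
    intro x
    have h := (keyterm x.1 x.2.1 x.2.2).1
    calc (1:ℝ) = Real.sqrt 1 := Real.sqrt_one.symm
    _ ≤ _ := Real.sqrt_le_sqrt (by linarith)
  have hlogf : ∀ x : {n : Fin ν → ℤ // n ≠ 0 ∧ n ≠ m},
      Real.log (Real.sqrt (1 + gapLen Em Ep x.1 / gapDist Em Ep m x.1))
        ≤ K/2 * Real.exp (-(3*κ₀/8 * znorm x.1)) + Wr/2 * Real.exp (-(t * znorm x.1)) := by
    intro x
    have h := keyterm x.1 x.2.1 x.2.2
    rw [Real.log_sqrt (by linarith [h.1])]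
    exact h.2
  have hPf1 : (1:ℝ) ≤ ∏' x : {n : Fin ν → ℤ // n ≠ 0 ∧ n ≠ m},
      Real.sqrt (1 + gapLen Em Ep x.1 / gapDist Em Ep m x.1) := by
    have hpos : ∀ x : {n : Fin ν → ℤ // n ≠ 0 ∧ n ≠ m},
        0 < Real.sqrt (1 + gapLen Em Ep x.1 / gapDist Em Ep m x.1) :=
      fun x => lt_of_lt_of_le one_pos (hone x)
    have hlogn : ∀ x : {n : Fin ν → ℤ // n ≠ 0 ∧ n ≠ m},
        0 ≤ Real.log (Real.sqrt (1 + gapLen Em Ep x.1 / gapDist Em Ep m x.1)) :=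
      fun x => Real.log_nonneg (hone x)
    have hsl : Summable fun x : {n : Fin ν → ℤ // n ≠ 0 ∧ n ≠ m} =>
        Real.log (Real.sqrt (1 + gapLen Em Ep x.1 / gapDist Em Ep m x.1)) :=
      Summable.of_nonneg_of_le hlogn hlogf husub
    have hp : HasProd (fun x : {n : Fin ν → ℤ // n ≠ 0 ∧ n ≠ m} =>
        Real.sqrt (1 + gapLen Em Ep x.1 / gapDist Em Ep m x.1))
        (Real.exp (∑' x : {n : Fin ν → ℤ // n ≠ 0 ∧ n ≠ m},
          Real.log (Real.sqrt (1 + gapLen Em Ep x.1 / gapDist Em Ep m x.1)))) := by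
      have h := hsl.hasSum.rexp
      have hfun : (rexp ∘ fun x : {n : Fin ν → ℤ // n ≠ 0 ∧ n ≠ m} =>
          Real.log (Real.sqrt (1 + gapLen Em Ep x.1 / gapDist Em Ep m x.1)))
          = fun x => Real.sqrt (1 + gapLen Em Ep x.1 / gapDist Em Ep m x.1) :=
        funext fun x => Real.exp_log (hpos x)
      rwa [hfun] at h
    rw [hp.tprod_eq]
    exact Real.one_le_exp (tsum_nonneg hlogn)
  have hsum_le : (∑' x : {n : Fin ν → ℤ // n ≠ 0 ∧ n ≠ m},
      (K/2 * Real.exp (-(3*κ₀/8 * znorm x.1)) + Wr/2 * Real.exp (-(t * znorm x.1))))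
      ≤ K/2*S₁ + Wr/2*S₂ := by
    have h1 : (∑' x : {n : Fin ν → ℤ // n ≠ 0 ∧ n ≠ m},
        (K/2 * Real.exp (-(3*κ₀/8 * znorm x.1)) + Wr/2 * Real.exp (-(t * znorm x.1))))
        ≤ ∑' n : Fin ν → ℤ,
          (K/2 * Real.exp (-(3*κ₀/8 * znorm n)) + Wr/2 * Real.exp (-(t * znorm n))) := by
      refine Summable.tsum_le_tsum_of_inj (Subtype.val) Subtype.val_injective
        (fun c _ => ?_) (fun x => le_refl _) husub husum
      exact add_nonneg (mul_nonneg (by linarith) (Real.exp_nonneg _))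
        (mul_nonneg (by linarith) (Real.exp_nonneg _))
    have h2 : (∑' n : Fin ν → ℤ,
        (K/2 * Real.exp (-(3*κ₀/8 * znorm n)) + Wr/2 * Real.exp (-(t * znorm n))))
        = K/2*S₁ + Wr/2*S₂ := by
      rw [Summable.tsum_add (hsum1.mul_left (K/2)) (hsum2.mul_left (Wr/2)),
        tsum_mul_left, tsum_mul_left, ← hS1_def, ← hS2_def]
    rw [h2] at h1; exact h1
  have hprod : (∏' x : {n : Fin ν → ℤ // n ≠ 0 ∧ n ≠ m},
      Real.sqrt (1 + gapLen Em Ep x.1 / gapDist Em Ep m x.1))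
      ≤ Real.exp (K/2*S₁ + Wr/2*S₂) :=
    le_trans (htpb hone hlogf husub) (Real.exp_le_exp.mpr hsum_le)
  -- factor bounds
  have hsq1 : Real.sqrt (gapLen Em Ep m) ≤ Real.sqrt (2*ε) * Real.exp (-(κ₀*r)/4) := by
    have h1 : gapLen Em Ep m ≤ 2*ε * Real.exp (-(κ₀*r)/2) := (Hγ m hm0).le
    have h2 : Real.exp (-(κ₀*r)/2) = Real.exp (-(κ₀*r)/4) ^ 2 := by
      rw [← Real.exp_nat_mul]; congr 1; push_cast; ring
    calc Real.sqrt (gapLen Em Ep m) ≤ Real.sqrt (2*ε * Real.exp (-(κ₀*r)/2)) :=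
      Real.sqrt_le_sqrt h1
    _ = Real.sqrt (2*ε) * Real.exp (-(κ₀*r)/4) := by
      rw [h2, Real.sqrt_mul (by positivity), Real.sqrt_sq (Real.exp_nonneg _)]
  have hfrac : (1 + (Em m - E0))/(Em m - E0) ≤ (1/a + 1) * Real.exp (b*X) := by
    have h1 : (1 + (Em m - E0))/(Em m - E0) = 1/(Em m - E0) + 1 := by
      field_simp
    have h2 : 1/(Em m - E0) ≤ 1/(a * r^(-b)) :=
      one_div_le_one_div_of_le harb0 hη0low
    have h3 : 1/(a * r^(-b)) = Real.exp (b*X)/a := by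
      rw [Real.rpow_def_of_pos hr0, ← hX_def]
      rw [show X * -b = -(b*X) by ring, Real.exp_neg]
      field_simp
    have h4 : 1 ≤ Real.exp (b*X) := Real.one_le_exp (mul_nonneg hb.le hX0)
    have h5 : (1/a + 1) * Real.exp (b*X) = Real.exp (b*X)/a + Real.exp (b*X) := by ring
    rw [h1, h5]
    rw [h3] at h2
    linarith
  have hsq2 : Real.sqrt ((Em m - E0) + gapLen Em Ep m)
      ≤ Real.sqrt (c + 2*ε) * Real.exp X := by
    have hgm : gapLen Em Ep m ≤ 2*ε := by
      have h0 : 0 ≤ κ₀ * r := mul_nonneg hκ₀.le (by linarith only [hr1])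
      have h1 : Real.exp (-(κ₀*r)/2) ≤ 1 :=
        Real.exp_le_one_iff.mpr (by linarith only [h0])
      have h2 : 2*ε * Real.exp (-(κ₀*r)/2) ≤ 2*ε * 1 :=
        mul_le_mul_of_nonneg_left h1 (by linarith only [hε])
      have h3 := Hγ m hm0
      rw [← hr_def] at h3
      linarith only [h2, h3]
    have hr2 : 1 ≤ r^2 := by
      have := pow_le_pow_left₀ zero_le_one hr1 2
      simpa using this
    have h1 : (Em m - E0) + gapLen Em Ep m ≤ (c + 2*ε) * r^2 := by
      have h4 := Hη0 m hm0
      rw [← hr_def] at h4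
      have h5 : 2*ε * 1 ≤ 2*ε * r^2 := mul_le_mul_of_nonneg_left hr2 (by linarith only [hε])
      have he : (c + 2*ε) * r^2 = c * r^2 + 2*ε*r^2 := by ring
      rw [he]
      linarith only [h4, h5, hgm]
    calc Real.sqrt ((Em m - E0) + gapLen Em Ep m) ≤ Real.sqrt ((c + 2*ε) * r^2) :=
      Real.sqrt_le_sqrt h1
    _ = Real.sqrt (c + 2*ε) * r := by
      rw [Real.sqrt_mul (by positivity), Real.sqrt_sq hr0.le]
    _ = Real.sqrt (c + 2*ε) * Real.exp X := by rw [hrX]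
  -- exponent estimate
  have hexpo : -(κ₀*r)/4 + b*X + (X + (K/2*S₁ + Wr/2*S₂)) ≤ K/2*S₁ + D*(1/σ)^3 := by
    have f1 : X ≤ 4 * Real.exp (X/4) := by
      have h := Real.add_one_le_exp (X/4)
      linarith
    have f2 : Real.exp (X/4) ≤ Real.exp (3/4*X) := Real.exp_le_exp.mpr (by linarith)
    have f3 : Real.exp (X/2) ≤ Real.exp (3/4*X) := Real.exp_le_exp.mpr (by linarith)
    have f4 : X * Real.exp (X/2) ≤ 4 * Real.exp (3/4*X) := by
      have h1 : X * Real.exp (X/2) ≤ 4 * Real.exp (X/4) * Real.exp (X/2) :=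
        mul_le_mul_of_nonneg_right f1 (Real.exp_nonneg _)
      have h2 : 4 * Real.exp (X/4) * Real.exp (X/2) = 4 * Real.exp (3/4*X) := by
        rw [mul_assoc, ← Real.exp_add]
        congr 2
        ring
      linarith
    have f5 : Real.exp (3/4*X) ≤ σ * r + (1/σ)^3 := by
      have h := exp34_le hσ hX0
      rwa [hrX] at h
    have hWrS : Wr/2*S₂ = C₂*G/2 * Real.exp (X/2) + b*G/2 * (X * Real.exp (X/2)) := by
      rw [hWr_def, hG_def, show t*A + X/2 = t*A + X/2 from rfl, Real.exp_add]
      ring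
    have hterm1 : (b+1)*X ≤ 4*(b+1) * Real.exp (3/4*X) := by
      have h1 : (b+1)*X ≤ (b+1)*(4*Real.exp (X/4)) :=
        mul_le_mul_of_nonneg_left f1 (by linarith)
      have h2 : (b+1)*(4*Real.exp (X/4)) ≤ (b+1)*(4*Real.exp (3/4*X)) :=
        mul_le_mul_of_nonneg_left (by linarith) (by linarith)
      linarith
    have hterm2 : C₂*G/2 * Real.exp (X/2) ≤ C₂*G/2 * Real.exp (3/4*X) :=
      mul_le_mul_of_nonneg_left f3 (by positivity)
    have hterm3 : b*G/2 * (X * Real.exp (X/2)) ≤ b*G/2 * (4 * Real.exp (3/4*X)) :=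
      mul_le_mul_of_nonneg_left f4 (by positivity)
    have hsumup : b*X + X + Wr/2*S₂ ≤ D * Real.exp (3/4*X) := by
      rw [hWrS, hD_def]
      have he : (4*(b+1) + C₂*G/2 + 2*b*G) * Real.exp (3/4*X)
          = 4*(b+1)*Real.exp (3/4*X) + C₂*G/2*Real.exp (3/4*X)
            + 2*b*G*Real.exp (3/4*X) := by ring
      have he2 : (b+1)*X = b*X + X := by ring
      have hterm1' : b*X + X ≤ 4*(b+1) * Real.exp (3/4*X) := by
        rw [← he2]; exact hterm1
      have hterm3' : b*G/2 * (X * Real.exp (X/2)) ≤ 2*b*G * Real.exp (3/4*X) := by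
        have : b*G/2 * (4 * Real.exp (3/4*X)) = 2*b*G * Real.exp (3/4*X) := by ring
        rw [← this]; exact hterm3
      rw [he]
      linarith only [hterm1', hterm2, hterm3']
    have hfin : D * Real.exp (3/4*X) ≤ D * (σ * r + (1/σ)^3) :=
      mul_le_mul_of_nonneg_left f5 hD
    have hfin2 : D * (σ * r + (1/σ)^3) = (D*σ) * r + D*(1/σ)^3 := by ring
    have hfin3 : (D*σ) * r ≤ (κ₀/4) * r :=
      mul_le_mul_of_nonneg_right hDσ (by linarith)
    linarith
  -- assemble
  have hPf0 : (0:ℝ) ≤ ∏' x : {n : Fin ν → ℤ // n ≠ 0 ∧ n ≠ m},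
      Real.sqrt (1 + gapLen Em Ep x.1 / gapDist Em Ep m x.1) := by linarith
  have hfrac0 : 0 ≤ (1 + (Em m - E0))/(Em m - E0) :=
    div_nonneg (by linarith) hη0pos.le
  unfold Cm
  have step1 : Real.sqrt (gapLen Em Ep m) * ((1 + (Em m - E0))/(Em m - E0))
      ≤ (Real.sqrt (2*ε) * Real.exp (-(κ₀*r)/4)) * ((1/a + 1) * Real.exp (b*X)) :=
    mul_le_mul hsq1 hfrac hfrac0 (by positivity)
  have step2 : Real.sqrt ((Em m - E0) + gapLen Em Ep m) *
      (∏' x : {n : Fin ν → ℤ // n ≠ 0 ∧ n ≠ m},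
        Real.sqrt (1 + gapLen Em Ep x.1 / gapDist Em Ep m x.1))
      ≤ (Real.sqrt (c + 2*ε) * Real.exp X) * Real.exp (K/2*S₁ + Wr/2*S₂) :=
    mul_le_mul hsq2 hprod hPf0 (by positivity)
  have step3 : Real.sqrt (gapLen Em Ep m) * ((1 + (Em m - E0))/(Em m - E0)) *
      (Real.sqrt ((Em m - E0) + gapLen Em Ep m) *
        (∏' x : {n : Fin ν → ℤ // n ≠ 0 ∧ n ≠ m},
          Real.sqrt (1 + gapLen Em Ep x.1 / gapDist Em Ep m x.1)))
      ≤ ((Real.sqrt (2*ε) * Real.exp (-(κ₀*r)/4)) * ((1/a + 1) * Real.exp (b*X))) *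
        ((Real.sqrt (c + 2*ε) * Real.exp X) * Real.exp (K/2*S₁ + Wr/2*S₂)) :=
    mul_le_mul step1 step2
      (mul_nonneg (Real.sqrt_nonneg _) hPf0)
      (by positivity)
  have hmerge : ((Real.sqrt (2*ε) * Real.exp (-(κ₀*r)/4)) * ((1/a + 1) * Real.exp (b*X))) *
      ((Real.sqrt (c + 2*ε) * Real.exp X) * Real.exp (K/2*S₁ + Wr/2*S₂))
      = (Real.sqrt (2*ε) * (1/a+1) * Real.sqrt (c+2*ε)) *
        Real.exp (-(κ₀*r)/4 + b*X + (X + (K/2*S₁ + Wr/2*S₂))) := by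
    simp only [Real.exp_add]
    ring
  have hlast : Real.exp (-(κ₀*r)/4 + b*X + (X + (K/2*S₁ + Wr/2*S₂)))
      ≤ Real.exp (K/2*S₁ + D*(1/σ)^3) := Real.exp_le_exp.mpr hexpo
  calc Real.sqrt (gapLen Em Ep m) * ((1 + (Em m - E0))/(Em m - E0)) *
      (Real.sqrt ((Em m - E0) + gapLen Em Ep m) *
        (∏' x : {n : Fin ν → ℤ // n ≠ 0 ∧ n ≠ m},
          Real.sqrt (1 + gapLen Em Ep x.1 / gapDist Em Ep m x.1)))
      ≤ ((Real.sqrt (2*ε) * Real.exp (-(κ₀*r)/4)) * ((1/a + 1) * Real.exp (b*X))) *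
        ((Real.sqrt (c + 2*ε) * Real.exp X) * Real.exp (K/2*S₁ + Wr/2*S₂)) := step3
  _ = (Real.sqrt (2*ε) * (1/a+1) * Real.sqrt (c+2*ε)) *
        Real.exp (-(κ₀*r)/4 + b*X + (X + (K/2*S₁ + Wr/2*S₂))) := hmerge
  _ ≤ (Real.sqrt (2*ε) * (1/a+1) * Real.sqrt (c+2*ε)) *
        Real.exp (K/2*S₁ + D*(1/σ)^3) :=
    mul_le_mul_of_nonneg_left hlast (by positivity)

end
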